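/- Let p₀, p₁, p₂ : Fin 3 → ℝ be three non-collinear points, let ℓ > 0, φ ∈ (0, π), and let c, s be real numbers with c^2 + s^2 = 1. Then there exists a unique point q : Fin 3 → ℝ such that dist p₂ q = ℓ, the undirected angle ∠ p₁ p₂ q equals φ, and the normalized torsion data of (p₀, p₁, p₂, q) equals (c, s). (This unique-extension property underlies the fact that the torsion angles of a chain determine it, and is the basis of sampling the configuration space by dihedral angles.) -/

import Mathlib

open Real EuclideanGeometry Matrix

/-- The identification of `Fin 3 → ℝ` with `EuclideanSpace ℝ (Fin 3)`. -/
noncomputable def toE : (Fin 3 → ℝ) → EuclideanSpace ℝ (Fin 3) := ⇑(WithLp.equiv 2 (Fin 3 → ℝ)).symm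

/-- The Euclidean norm of a vector in `Fin 3 → ℝ`. -/
noncomputable def eNorm (v : Fin 3 → ℝ) : ℝ := ‖toE v‖

/-- The normalized torsion data of a quadruple `(a, b, c, d)` of points in `ℝ³`:
the pair `(⟪n₁, n₂⟫, ⟪n₁ ×₃ n₂, e₂ / ‖e₂‖⟫)` where `e₁ = b - a`, `e₂ = c - b`, `e₃ = d - c`,
`m₁ = e₁ ×₃ e₂`, `m₂ = e₂ ×₃ e₃`, `n₁ = m₁ / ‖m₁‖`, `n₂ = m₂ / ‖m₂‖`. -/
noncomputable def normalizedTorsionData (a b c d : Fin 3 → ℝ) : ℝ × ℝ :=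
  let e₁ := b - a
  let e₂ := c - b
  let e₃ := d - c
  let m₁ := e₁ ⨯₃ e₂
  let m₂ := e₂ ⨯₃ e₃
  let n₁ := (eNorm m₁)⁻¹ • m₁
  let n₂ := (eNorm m₂)⁻¹ • m₂
  (n₁ ⬝ᵥ n₂, (n₁ ⨯₃ n₂) ⬝ᵥ ((eNorm e₂)⁻¹ • e₂))

/-!
Take the orthonormal frame `u = (p₂ - p₁)/‖p₂ - p₁‖`, `n` the unit normal `m₁/‖m₁‖` of the plane
`p₀p₁p₂`, and `n ⨯₃ u`. If `(x, y, z)` are the coordinates of `q - p₂` in the frame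
`(u, n ⨯₃ u, n)`, then `dist p₂ q = √(x² + y² + z²)`, `cos ∠ p₁ p₂ q = -x / √(x² + y² + z²)`, and the
torsion data is the unit vector `(y, z)/√(y² + z²)`. So the three conditions fix the spherical
coordinates of `q - p₂`, namely `(x, y, z) = (-ℓ cos φ, ℓ sin φ c, ℓ sin φ s)`, and coordinates in an
orthonormal frame determine a vector.
-/

lemma inner_toE (a b : Fin 3 → ℝ) : inner ℝ (toE a) (toE b) = a ⬝ᵥ b := by
  simp [toE, PiLp.inner_apply, dotProduct, mul_comm]

lemma eNorm_sq (v : Fin 3 → ℝ) : eNorm v ^ 2 = v ⬝ᵥ v := by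
  rw [eNorm, ← real_inner_self_eq_norm_sq, inner_toE]

lemma eNorm_eq_sqrt (v : Fin 3 → ℝ) : eNorm v = √(v ⬝ᵥ v) := by
  rw [← eNorm_sq]
  exact (Real.sqrt_sq (norm_nonneg _)).symm

lemma eNorm_pos {v : Fin 3 → ℝ} (hv : v ≠ 0) : 0 < eNorm v :=
  norm_pos_iff.mpr ((WithLp.linearEquiv 2 ℝ (Fin 3 → ℝ)).symm.map_ne_zero_iff.mpr hv)

lemma eNorm_smul (r : ℝ) (v : Fin 3 → ℝ) : eNorm (r • v) = |r| * eNorm v := by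
  rw [eNorm, eNorm, ← Real.norm_eq_abs, ← norm_smul]
  rfl

lemma dist_toE (a b : Fin 3 → ℝ) : dist (toE a) (toE b) = eNorm (b - a) := by
  rw [dist_comm, dist_eq_norm]
  rfl

lemma angle_toE (a b c : Fin 3 → ℝ) :
    ∠ (toE a) (toE b) (toE c) =
      arccos ((a - b) ⬝ᵥ (c - b) / (eNorm (a - b) * eNorm (c - b))) := by
  rw [EuclideanGeometry.angle, InnerProductGeometry.angle]
  exact congrArg arccos (by rw [← inner_toE]; rfl)

noncomputable def unitVec (v : Fin 3 → ℝ) : Fin 3 → ℝ := (eNorm v)⁻¹ • v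

lemma unitVec_dotProduct_self {v : Fin 3 → ℝ} (hv : v ≠ 0) : unitVec v ⬝ᵥ unitVec v = 1 := by
  have hpos := eNorm_pos hv
  rw [unitVec, smul_dotProduct, dotProduct_smul, smul_eq_mul, smul_eq_mul, ← eNorm_sq]
  field_simp

lemma eNorm_smul_unitVec {v : Fin 3 → ℝ} (hv : v ≠ 0) : eNorm v • unitVec v = v := by
  rw [unitVec, smul_smul, mul_inv_cancel₀ (eNorm_pos hv).ne', one_smul]

lemma unitVec_smul_of_pos {r : ℝ} (hr : 0 < r) (v : Fin 3 → ℝ) : unitVec (r • v) = unitVec v := by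
  rw [unitVec, unitVec, eNorm_smul, abs_of_pos hr, smul_smul, mul_inv, mul_comm r⁻¹, mul_assoc,
    inv_mul_cancel₀ hr.ne', mul_one]

lemma angle_toE_eq_arccos_unitVec (a b c : Fin 3 → ℝ) :
    ∠ (toE a) (toE b) (toE c) = arccos (-((c - b) ⬝ᵥ unitVec (b - a)) / eNorm (c - b)) := by
  rw [angle_toE, unitVec, dotProduct_smul, smul_eq_mul, ← neg_sub b a, neg_dotProduct,
    eNorm_eq_sqrt (-(b - a)), neg_dotProduct, dotProduct_neg, neg_neg, ← eNorm_eq_sqrt,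
    dotProduct_comm]
  ring_nf

lemma cross_sub_ne_zero_of_not_collinear {a b c : Fin 3 → ℝ}
    (h : ¬ Collinear ℝ ({a, b, c} : Set (Fin 3 → ℝ))) : (b - a) ⨯₃ (c - b) ≠ 0 := by
  rw [crossProduct_ne_zero_iff_linearIndependent, LinearIndependent.pair_iff]
  contrapose! h
  obtain ⟨s, t, hst, hne⟩ := h
  have hk : s ^ 2 + t ^ 2 ≠ 0 := by
    by_cases hs : s = 0
    · simpa [hs] using hne hs
    · positivity
  -- the relation `s • (b - a) + t • (c - b) = 0` makes both edges multiples of this vector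
  rw [collinear_iff_of_mem (Set.mem_insert_of_mem a (Set.mem_insert b {c}))]
  refine ⟨t • (b - a) - s • (c - b), ?_⟩
  simp only [Set.mem_insert_iff, Set.mem_singleton_iff, vadd_eq_add, forall_eq_or_imp, forall_eq]
  refine ⟨⟨-(t / (s ^ 2 + t ^ 2)), ?_⟩, ⟨0, by simp⟩, ⟨-(s / (s ^ 2 + t ^ 2)), ?_⟩⟩
  · linear_combination (norm := skip) (-(s / (s ^ 2 + t ^ 2))) • hst
    match_scalars <;> field_simp <;> ring
  · linear_combination (norm := skip) (t / (s ^ 2 + t ^ 2)) • hst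
    match_scalars <;> field_simp <;> ring

structure IsOrthonormalPair (u n : Fin 3 → ℝ) : Prop where
  dotProduct_self_left : u ⬝ᵥ u = 1
  dotProduct_self_right : n ⬝ᵥ n = 1
  dotProduct_eq_zero : u ⬝ᵥ n = 0

def frameCoords (u n v : Fin 3 → ℝ) : ℝ × ℝ × ℝ := (v ⬝ᵥ u, v ⬝ᵥ n ⨯₃ u, v ⬝ᵥ n)

namespace IsOrthonormalPair

variable {u n : Fin 3 → ℝ}

lemma cross_dotProduct_self (h : IsOrthonormalPair u n) : n ⨯₃ u ⬝ᵥ n ⨯₃ u = 1 := by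
  rw [cross_dot_cross, h.dotProduct_self_left, h.dotProduct_self_right, dotProduct_comm n u,
    h.dotProduct_eq_zero]
  ring

lemma dotProduct_self_eq (h : IsOrthonormalPair u n) (v : Fin 3 → ℝ) :
    v ⬝ᵥ v = (v ⬝ᵥ u) ^ 2 + (v ⬝ᵥ n ⨯₃ u) ^ 2 + (v ⬝ᵥ n) ^ 2 := by
  have hlagrange := cross_dot_cross v (n ⨯₃ u) v (n ⨯₃ u)
  rw [cross_cross_eq_smul_sub_smul', h.cross_dotProduct_self] at hlagrange
  simp only [sub_dotProduct, dotProduct_sub, smul_dotProduct, dotProduct_smul, smul_eq_mul,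
    h.dotProduct_self_left, h.dotProduct_self_right, h.dotProduct_eq_zero,
    dotProduct_comm n u, dotProduct_comm n v, dotProduct_comm (n ⨯₃ u) v] at hlagrange
  linear_combination -hlagrange

lemma cross_dotProduct_cross (h : IsOrthonormalPair u n) (v : Fin 3 → ℝ) :
    u ⨯₃ v ⬝ᵥ u ⨯₃ v = (v ⬝ᵥ n ⨯₃ u) ^ 2 + (v ⬝ᵥ n) ^ 2 := by
  rw [cross_dot_cross, h.dotProduct_self_left, h.dotProduct_self_eq v, dotProduct_comm u v]
  ring

lemma cross_cross_dotProduct (h : IsOrthonormalPair u n) (v : Fin 3 → ℝ) :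
    n ⨯₃ (u ⨯₃ v) ⬝ᵥ u = v ⬝ᵥ n := by
  rw [cross_cross_eq_smul_sub_smul', sub_dotProduct, smul_dotProduct, smul_dotProduct,
    h.dotProduct_self_left, h.dotProduct_eq_zero, smul_eq_mul, smul_eq_mul, dotProduct_comm n v]
  ring

lemma frameCoords_bijective (h : IsOrthonormalPair u n) :
    Function.Bijective (frameCoords u n) := by
  refine ⟨fun v v' hvv' => ?_, fun ⟨x, y, z⟩ => ⟨x • u + y • n ⨯₃ u + z • n, ?_⟩⟩
  · simp only [frameCoords, Prod.mk.injEq] at hvv'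
    obtain ⟨hx, hy, hz⟩ := hvv'
    rw [← sub_eq_zero, ← dotProduct_self_eq_zero, h.dotProduct_self_eq]
    simp only [sub_dotProduct, hx, hy, hz, sub_self]
    ring
  · have hnu : n ⬝ᵥ u = 0 := by rw [dotProduct_comm, h.dotProduct_eq_zero]
    have hwu : n ⨯₃ u ⬝ᵥ u = 0 := by rw [dotProduct_comm, dot_cross_self]
    have hwn : n ⨯₃ u ⬝ᵥ n = 0 := by rw [dotProduct_comm, dot_self_cross]
    simp only [frameCoords, add_dotProduct, smul_dotProduct, smul_eq_mul, h.cross_dotProduct_self,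
      h.dotProduct_self_left, h.dotProduct_self_right, h.dotProduct_eq_zero, hnu, hwu, hwn,
      dot_cross_self, dot_self_cross, mul_one, mul_zero, add_zero, zero_add]

end IsOrthonormalPair

lemma isOrthonormalPair_unitVec {a b c : Fin 3 → ℝ} (h : (b - a) ⨯₃ (c - b) ≠ 0) :
    IsOrthonormalPair (unitVec (c - b)) (unitVec ((b - a) ⨯₃ (c - b))) where
  dotProduct_self_left := unitVec_dotProduct_self fun hcb => h (by rw [hcb, map_zero])
  dotProduct_self_right := unitVec_dotProduct_self h
  dotProduct_eq_zero := by
    rw [unitVec, unitVec, smul_dotProduct, dotProduct_smul, dot_cross_self, smul_zero, smul_zero]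

/-- The torsion data is the direction of the last edge `d - c`, projected to the plane orthogonal
to `c - b`, read in the frame `(n ⨯₃ u, n)` of that plane. -/
lemma normalizedTorsionData_eq {a b c d u n : Fin 3 → ℝ} (h : (b - a) ⨯₃ (c - b) ≠ 0)
    (hu : u = unitVec (c - b)) (hn : n = unitVec ((b - a) ⨯₃ (c - b))) :
    normalizedTorsionData a b c d =
      ((d - c) ⬝ᵥ n ⨯₃ u / √(((d - c) ⬝ᵥ n ⨯₃ u) ^ 2 + ((d - c) ⬝ᵥ n) ^ 2),
        (d - c) ⬝ᵥ n / √(((d - c) ⬝ᵥ n ⨯₃ u) ^ 2 + ((d - c) ⬝ᵥ n) ^ 2)) := by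
  have hframe : IsOrthonormalPair u n := hu ▸ hn ▸ isOrthonormalPair_unitVec h
  have hcb : c - b ≠ 0 := fun hcb => h (by rw [hcb, map_zero])
  have htangent : c - b = eNorm (c - b) • u := by rw [hu, eNorm_smul_unitVec hcb]
  have hbinormal : unitVec ((c - b) ⨯₃ (d - c)) = unitVec (u ⨯₃ (d - c)) := by
    rw [htangent, LinearMap.map_smul₂, unitVec_smul_of_pos (eNorm_pos hcb)]
  have hnorm : eNorm (u ⨯₃ (d - c)) = √(((d - c) ⬝ᵥ n ⨯₃ u) ^ 2 + ((d - c) ⬝ᵥ n) ^ 2) := by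
    rw [eNorm_eq_sqrt, hframe.cross_dotProduct_cross]
  change (unitVec ((b - a) ⨯₃ (c - b)) ⬝ᵥ unitVec ((c - b) ⨯₃ (d - c)),
    unitVec ((b - a) ⨯₃ (c - b)) ⨯₃ unitVec ((c - b) ⨯₃ (d - c)) ⬝ᵥ unitVec (c - b)) = _
  rw [← hu, ← hn, hbinormal, unitVec, hnorm, dotProduct_smul, _root_.map_smul, smul_dotProduct,
    hframe.cross_cross_dotProduct, triple_product_permutation, triple_product_permutation]
  simp only [smul_eq_mul, div_eq_inv_mul]

lemma sphericalCoords_iff {ℓ φ c s x y z : ℝ} (hℓ : 0 < ℓ) (hφ : φ ∈ Set.Ioo 0 π)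
    (hcs : c ^ 2 + s ^ 2 = 1) :
    (√(x ^ 2 + y ^ 2 + z ^ 2) = ℓ ∧ arccos (-x / √(x ^ 2 + y ^ 2 + z ^ 2)) = φ ∧
        (y / √(y ^ 2 + z ^ 2), z / √(y ^ 2 + z ^ 2)) = (c, s)) ↔
      (x, y, z) = (-(ℓ * cos φ), ℓ * sin φ * c, ℓ * sin φ * s) := by
  have hsin : 0 < sin φ := sin_pos_of_pos_of_lt_pi hφ.1 hφ.2
  have hℓsin : 0 < ℓ * sin φ := mul_pos hℓ hsin
  have hpyth := sin_sq_add_cos_sq φ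
  simp only [Prod.mk.injEq]
  constructor
  · rintro ⟨hρ, hθ, hy, hz⟩
    have hρ2 : x ^ 2 + y ^ 2 + z ^ 2 = ℓ ^ 2 := by
      rw [← hρ, sq_sqrt (by positivity)]
    rw [hρ] at hθ
    have hx2 : x ^ 2 ≤ ℓ ^ 2 := by nlinarith
    obtain ⟨hxℓ, hxℓ'⟩ := abs_le_of_sq_le_sq' hx2 hℓ.le
    have hx : x = -(ℓ * cos φ) := by
      rw [← hθ, cos_arccos (by rw [le_div_iff₀ hℓ]; linarith) (by rw [div_le_iff₀ hℓ]; linarith)]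
      field_simp
    have hσ : √(y ^ 2 + z ^ 2) = ℓ * sin φ := by
      rw [sqrt_eq_iff_eq_sq (by positivity) hℓsin.le]
      rw [hx] at hρ2
      linear_combination hρ2 - ℓ ^ 2 * hpyth
    rw [hσ, div_eq_iff hℓsin.ne'] at hy hz
    exact ⟨hx, by rw [hy]; ring, by rw [hz]; ring⟩
  · rintro ⟨rfl, rfl, rfl⟩
    have hρ : √((-(ℓ * cos φ)) ^ 2 + (ℓ * sin φ * c) ^ 2 + (ℓ * sin φ * s) ^ 2) = ℓ := by
      rw [sqrt_eq_iff_eq_sq (by positivity) hℓ.le]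
      linear_combination (ℓ * sin φ) ^ 2 * hcs + ℓ ^ 2 * hpyth
    have hσ : √((ℓ * sin φ * c) ^ 2 + (ℓ * sin φ * s) ^ 2) = ℓ * sin φ := by
      rw [sqrt_eq_iff_eq_sq (by positivity) hℓsin.le]
      linear_combination (ℓ * sin φ) ^ 2 * hcs
    refine ⟨hρ, ?_, ?_, ?_⟩
    · rw [hρ, neg_neg, mul_div_cancel_left₀ _ hℓ.ne', arccos_cos hφ.1.le hφ.2.le]
    · rw [hσ, mul_div_cancel_left₀ _ hℓsin.ne']
    · rw [hσ, mul_div_cancel_left₀ _ hℓsin.ne']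

theorem existsUnique_extension_with_prescribed_torsion
    (p₀ p₁ p₂ : Fin 3 → ℝ) (hp : ¬ Collinear ℝ ({p₀, p₁, p₂} : Set (Fin 3 → ℝ)))
    (ℓ : ℝ) (hℓ : 0 < ℓ) (φ : ℝ) (hφ : φ ∈ Set.Ioo 0 π)
    (c s : ℝ) (hcs : c ^ 2 + s ^ 2 = 1) :
    ∃! q : Fin 3 → ℝ,
      dist (toE p₂) (toE q) = ℓ ∧
      ∠ (toE p₁) (toE p₂) (toE q) = φ ∧
      normalizedTorsionData p₀ p₁ p₂ q = (c, s) := by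
  have hcross := cross_sub_ne_zero_of_not_collinear hp
  set u := unitVec (p₂ - p₁) with hu
  set n := unitVec ((p₁ - p₀) ⨯₃ (p₂ - p₁)) with hn
  have hframe : IsOrthonormalPair u n := isOrthonormalPair_unitVec hcross
  have hiff : ∀ q, (dist (toE p₂) (toE q) = ℓ ∧ ∠ (toE p₁) (toE p₂) (toE q) = φ ∧
      normalizedTorsionData p₀ p₁ p₂ q = (c, s)) ↔
      frameCoords u n (q - p₂) = (-(ℓ * cos φ), ℓ * sin φ * c, ℓ * sin φ * s) := fun q => by
    rw [dist_toE, angle_toE_eq_arccos_unitVec, normalizedTorsionData_eq hcross hu hn, eNorm_eq_sqrt,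
      hframe.dotProduct_self_eq]
    exact sphericalCoords_iff hℓ hφ hcs
  simp only [hiff]
  exact (hframe.frameCoords_bijective.comp (Equiv.subRight p₂).bijective).existsUnique _
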